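/- Let X be a real vector space, let ρ : X → ℝ be convex, and let λ, γ > 0. For every η ∈ X, the infimum over ξ ∈ X of λ·ρ((η − ξ)/λ) + γ·ρ(ξ/γ) is attained at ξ* = (γ/(γ + λ))·η, and the minimum value equals (λ + γ)·ρ(η/(λ + γ)). That is, ξ* = (γ/(γ+λ))η is an optimal value for the problem of minimizing ρ_λ(η − ξ) + ρ_γ(ξ) over ξ ∈ X, and ρ_λ □ ρ_γ(η) = ρ_{λ+γ}(η). -/

import Mathlib

/-!
The map `(t, ξ) ↦ t ρ(ξ / t)` is the perspective of `ρ`: it is positively homogeneous, and for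
convex `ρ` it is subadditive, since `(ξ₁ + ξ₂) / (t₁ + t₂)` is the convex combination of
`ξ₁ / t₁` and `ξ₂ / t₂` with weights `t₁ / (t₁ + t₂)` and `t₂ / (t₁ + t₂)`. Subadditivity is the
lower bound `ρ_{λ+γ}(η) ≤ ρ_λ(η - ξ) + ρ_γ(ξ)`, and homogeneity shows that splitting `η` in the
ratio `λ : γ` attains it.
-/

section Dilatation

variable {X : Type*} [AddCommGroup X] [Module ℝ X]

/-- The dilatation `ρ_t` of `ρ` with risk tolerance coefficient `t`. -/
noncomputable def dilatation (ρ : X → ℝ) (t : ℝ) (ξ : X) : ℝ :=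
  t * ρ (t⁻¹ • ξ)

theorem dilatation_mul_smul (ρ : X → ℝ) (c t : ℝ) (ξ : X) :
    dilatation ρ (c * t) (c • ξ) = c * dilatation ρ t ξ := by
  rcases eq_or_ne c 0 with rfl | hc
  · simp [dilatation]
  · rw [dilatation, dilatation, mul_inv, mul_comm c⁻¹, mul_smul, inv_smul_smul₀ hc, mul_assoc]

theorem dilatation_div_smul_add_div_smul (ρ : X → ℝ) {a b : ℝ} (hab : a + b ≠ 0) (η : X) :
    dilatation ρ a ((a / (a + b)) • η) + dilatation ρ b ((b / (a + b)) • η) =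
      dilatation ρ (a + b) η := by
  have ha := dilatation_mul_smul ρ (a / (a + b)) (a + b) η
  have hb := dilatation_mul_smul ρ (b / (a + b)) (a + b) η
  rw [div_mul_cancel₀ _ hab] at ha hb
  rw [ha, hb, ← add_mul, ← add_div, div_self hab, one_mul]

theorem ConvexOn.dilatation_add_le {s : Set X} {ρ : X → ℝ} (hρ : ConvexOn ℝ s ρ)
    {a b : ℝ} (ha : 0 < a) (hb : 0 < b) {x y : X} (hx : a⁻¹ • x ∈ s) (hy : b⁻¹ • y ∈ s) :
    dilatation ρ (a + b) (x + y) ≤ dilatation ρ a x + dilatation ρ b y := by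
  have hab : 0 < a + b := add_pos ha hb
  have hcomb : (a / (a + b)) • a⁻¹ • x + (b / (a + b)) • b⁻¹ • y = (a + b)⁻¹ • (x + y) := by
    rw [smul_smul, smul_smul, smul_add]
    congr 2 <;> field_simp
  have hconv := hρ.2 hx hy (div_pos ha hab).le (div_pos hb hab).le
    (by rw [← add_div, div_self hab.ne'])
  rw [hcomb, smul_eq_mul, smul_eq_mul] at hconv
  calc dilatation ρ (a + b) (x + y)
      ≤ (a + b) * (a / (a + b) * ρ (a⁻¹ • x) + b / (a + b) * ρ (b⁻¹ • y)) := by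
        unfold dilatation; gcongr
    _ = dilatation ρ a x + dilatation ρ b y := by
        unfold dilatation; field_simp

end Dilatation

/-- Theorem 3.4 (abstract content): for a convex ρ and λ, γ > 0, the infimum of
ρ_λ(η - ξ) + ρ_γ(ξ) over ξ is attained at ξ* = (γ/(γ+λ))·η and equals ρ_{λ+γ}(η). -/
theorem stmt_4 {X : Type*} [AddCommGroup X] [Module ℝ X]
    (ρ : X → ℝ)
    (hconv : ∀ x y : X, ∀ a : ℝ, a ∈ Set.Icc (0 : ℝ) 1 →
      ρ (a • x + (1 - a) • y) ≤ a * ρ x + (1 - a) * ρ y)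
    (lam gam : ℝ) (hlam : 0 < lam) (hgam : 0 < gam) (η : X) :
    lam * ρ (lam⁻¹ • (η - (gam / (gam + lam)) • η)) +
        gam * ρ (gam⁻¹ • ((gam / (gam + lam)) • η))
      = (lam + gam) * ρ ((lam + gam)⁻¹ • η) ∧
    ∀ ξ : X, (lam + gam) * ρ ((lam + gam)⁻¹ • η) ≤
      lam * ρ (lam⁻¹ • (η - ξ)) + gam * ρ (gam⁻¹ • ξ) := by
  have hsum : lam + gam ≠ 0 := (add_pos hlam hgam).ne'
  have hρ : ConvexOn ℝ Set.univ ρ := by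
    refine ⟨convex_univ, fun x _ y _ a b ha hb hab => ?_⟩
    obtain rfl : b = 1 - a := by linarith
    exact hconv x y a ⟨ha, by linarith⟩
  have hsplit : η - (gam / (gam + lam)) • η = (lam / (lam + gam)) • η := by
    rw [add_comm gam lam, sub_eq_iff_eq_add, ← add_smul, ← add_div, div_self hsum, one_smul]
  refine ⟨?_, fun ξ => ?_⟩
  · change dilatation ρ lam _ + dilatation ρ gam _ = dilatation ρ (lam + gam) η
    rw [hsplit, add_comm gam lam]
    exact dilatation_div_smul_add_div_smul ρ hsum η
  · change dilatation ρ (lam + gam) η ≤ dilatation ρ lam (η - ξ) + dilatation ρ gam ξ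
    simpa only [sub_add_cancel] using
      hρ.dilatation_add_le hlam hgam (Set.mem_univ _) (Set.mem_univ _) (x := η - ξ) (y := ξ)
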